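/- Let λ₁, …, λₙ be a basis of Λ and λ₁*, …, λₙ* the dual basis of Λ*, and set e_i := ι(λ_i, 0)·ι(0, λ_i*) ∈ Cl for i = 1, …, n. Then: (i) the elements e₁, …, eₙ are idempotents of Cl which commute pairwise; (ii) for every left Cl-module S, the subspace of S annihilated by Λ equals the image of the product idempotent: {v ∈ S : ι(λ, 0)·v = 0 for all λ ∈ Λ} = (e₁·e₂⋯eₙ)·S. -/

import Mathlib

/-!
Write `aᵢ := ι(λᵢ, 0)` and `cᵢ := ι(0, λᵢ*)`, so `eᵢ = aᵢcᵢ`. In `Cl` these satisfy the canonical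
anticommutation relations: the `a`'s and the `c`'s square to zero, anticommute among themselves,
and `aᵢcⱼ + cⱼaᵢ = δᵢⱼ`. Hence `eᵢ² = aᵢ(1 - aᵢcᵢ)cᵢ = eᵢ`, and for `i ≠ j` both `aᵢ` and `cᵢ`
anticommute with `aⱼ` and `cⱼ`, so they commute with `eⱼ`, and so does `eᵢ`.

If `Λ` kills `v`, then `eᵢv = (1 - cᵢaᵢ)v = v` for every `i`, so `v = (e₁⋯eₙ)v`. Conversely, the
`eⱼ` commute, so `e₁⋯eₙ` can be written with `eᵢ` in front, and `aᵢeᵢ = aᵢ²cᵢ = 0`; thus every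
`aᵢ`, and by linearity every `ι(λ, 0)`, annihilates `e₁⋯eₙ`.
-/

noncomputable section

variable (k : Type*) [Field k] (Λ : Type*) [AddCommGroup Λ] [Module k Λ]

/-- The hyperbolic quadratic form `Q (x, φ) = φ x` on `H = Λ × Λ*`. -/
def hypQ : QuadraticForm k (Λ × Module.Dual k Λ) :=
  (QuadraticForm.dualProd k Λ).comp (LinearEquiv.prodComm k Λ (Module.Dual k Λ)).toLinearMap

open CliffordAlgebra QuadraticMap

theorem commute_mul_of_anticommute {R : Type*} [Monoid R] [HasDistribNeg R] {x y z : R}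
    (hy : x * y = -(y * x)) (hz : x * z = -(z * x)) : Commute x (y * z) := by
  rw [Commute, SemiconjBy, ← mul_assoc, hy, neg_mul, mul_assoc, hz, mul_neg, neg_neg, mul_assoc]

theorem isIdempotentElem_mul_of_mul_add_mul_eq_one {R : Type*} [Ring R] {a c : R}
    (hc : c * c = 0) (h : a * c + c * a = 1) : IsIdempotentElem (a * c) := by
  rw [IsIdempotentElem, mul_assoc, ← mul_assoc c, eq_sub_of_add_eq' h, sub_mul, one_mul,
    mul_assoc a, hc, mul_zero, sub_zero]

variable {k Λ}

theorem hypQ_apply (x : Λ) (φ : Module.Dual k Λ) : hypQ k Λ (x, φ) = φ x := rfl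

theorem polar_hypQ (x y : Λ) (φ ψ : Module.Dual k Λ) :
    polar (hypQ k Λ) (x, φ) (y, ψ) = φ y + ψ x := by
  simp only [polar, hypQ_apply, Prod.mk_add_mk, map_add, LinearMap.add_apply]
  ring

theorem ι_hypQ_mul_ι_add_swap (x y : Λ) (φ ψ : Module.Dual k Λ) :
    ι (hypQ k Λ) (x, φ) * ι (hypQ k Λ) (y, ψ) + ι (hypQ k Λ) (y, ψ) * ι (hypQ k Λ) (x, φ) =
      algebraMap k _ (φ y + ψ x) := by
  rw [ι_mul_ι_add_swap, polar_hypQ]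

theorem ι_hypQ_mul_ι_comm_of_apply_add_apply_eq_zero {x y : Λ} {φ ψ : Module.Dual k Λ}
    (h : φ y + ψ x = 0) :
    ι (hypQ k Λ) (x, φ) * ι (hypQ k Λ) (y, ψ) = -(ι (hypQ k Λ) (y, ψ) * ι (hypQ k Λ) (x, φ)) :=
  eq_neg_of_add_eq_zero_left <| by rw [ι_hypQ_mul_ι_add_swap, h, map_zero]

theorem ι_hypQ_inl_mul_self (x : Λ) :
    ι (hypQ k Λ) (x, 0) * ι (hypQ k Λ) (x, 0) = 0 := by
  rw [ι_sq_scalar, hypQ_apply, LinearMap.zero_apply, map_zero]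

theorem ι_hypQ_inr_mul_self (φ : Module.Dual k Λ) :
    ι (hypQ k Λ) (0, φ) * ι (hypQ k Λ) (0, φ) = 0 := by
  rw [ι_sq_scalar, hypQ_apply, map_zero, map_zero]

section basisIdempotent

variable {ι : Type*} (b : Module.Basis ι k Λ)

def basisIdempotent (i : ι) : CliffordAlgebra (hypQ k Λ) :=
  CliffordAlgebra.ι (hypQ k Λ) (b i, 0) * CliffordAlgebra.ι (hypQ k Λ) (0, b.coord i)

theorem basisIdempotent_add_ι_inr_mul_ι_inl (i : ι) :
    basisIdempotent b i +
        CliffordAlgebra.ι (hypQ k Λ) (0, b.coord i) * CliffordAlgebra.ι (hypQ k Λ) (b i, 0) =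
      1 := by
  rw [basisIdempotent, ι_hypQ_mul_ι_add_swap]
  simp

theorem isIdempotentElem_basisIdempotent (i : ι) : IsIdempotentElem (basisIdempotent b i) :=
  isIdempotentElem_mul_of_mul_add_mul_eq_one (ι_hypQ_inr_mul_self _)
    (basisIdempotent_add_ι_inr_mul_ι_inl b i)

theorem commute_basisIdempotent (i j : ι) :
    Commute (basisIdempotent b i) (basisIdempotent b j) := by
  obtain rfl | hij := eq_or_ne i j
  · exact Commute.refl _
  have anticomm {x y : Λ} {φ ψ : Module.Dual k Λ} (h : φ y + ψ x = 0) :=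
    ι_hypQ_mul_ι_comm_of_apply_add_apply_eq_zero h
  exact .mul_left
    (commute_mul_of_anticommute (anticomm (by simp)) (anticomm (by simp [hij])))
    (commute_mul_of_anticommute (anticomm (by simp [hij.symm])) (anticomm (by simp)))

theorem basisIdempotent_smul_of_ι_hypQ_inl_smul_eq_zero {S : Type*} [AddCommGroup S]
    [Module (CliffordAlgebra (hypQ k Λ)) S] {v : S} {i : ι}
    (hv : CliffordAlgebra.ι (hypQ k Λ) (b i, 0) • v = 0) : basisIdempotent b i • v = v := by
  rw [eq_sub_of_add_eq (basisIdempotent_add_ι_inr_mul_ι_inl b i), sub_smul, one_smul, mul_smul,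
    hv, smul_zero, sub_zero]

theorem ι_hypQ_inl_mul_basisIdempotent_self (i : ι) :
    CliffordAlgebra.ι (hypQ k Λ) (b i, 0) * basisIdempotent b i = 0 := by
  rw [basisIdempotent, ← mul_assoc, ι_hypQ_inl_mul_self, zero_mul]

end basisIdempotent

theorem ι_hypQ_inl_mul_prod_basisIdempotent {n : ℕ} (b : Module.Basis (Fin n) k Λ) (l : Λ) :
    CliffordAlgebra.ι (hypQ k Λ) (l, 0) * (List.ofFn (basisIdempotent b)).prod = 0 := by
  classical
  let f := LinearMap.mulRight k (List.ofFn (basisIdempotent b)).prod ∘ₗ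
    CliffordAlgebra.ι (hypQ k Λ) ∘ₗ LinearMap.inl k Λ (Module.Dual k Λ)
  suffices f = 0 from LinearMap.congr_fun this l
  refine b.ext fun i => ?_
  have hcomm : ∀ x ∈ List.ofFn (basisIdempotent b), ∀ y ∈ List.ofFn (basisIdempotent b),
      x * y = y * x := by
    simp only [List.mem_ofFn]
    rintro _ ⟨i, rfl⟩ _ ⟨j, rfl⟩
    exact commute_basisIdempotent b i j
  change CliffordAlgebra.ι (hypQ k Λ) (b i, 0) * _ = 0
  rw [← List.prod_erase_of_comm (List.mem_ofFn.2 ⟨i, rfl⟩) hcomm, ← mul_assoc,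
    ι_hypQ_inl_mul_basisIdempotent_self, zero_mul]

/-- For a basis `λ₁,…,λₙ` of `Λ` with dual basis `λ₁*,…,λₙ*`, the
elements `e_i := ι(λ_i,0)·ι(0,λ_i*)` are pairwise commuting idempotents of `Cl`, and for
every left `Cl`-module `S` the subspace of `S` annihilated by `Λ` is the image of the
product idempotent `e₁·e₂⋯eₙ`. -/
theorem annihilator_eq_image_of_product_idempotent
    (n : ℕ) (b : Module.Basis (Fin n) k Λ)
    (e : Fin n → CliffordAlgebra (hypQ k Λ))
    (he : e = fun i => CliffordAlgebra.ι (hypQ k Λ) (b i, 0)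
      * CliffordAlgebra.ι (hypQ k Λ) (0, b.coord i))
    (S : Type*) [AddCommGroup S] [Module (CliffordAlgebra (hypQ k Λ)) S] :
    -- (i) the `e_i` are pairwise commuting idempotents
    (∀ i : Fin n, e i * e i = e i)
    ∧ (∀ i j : Fin n, e i * e j = e j * e i)
    -- (ii) the subspace annihilated by `Λ` is the image of `e₁·e₂⋯eₙ`
    ∧ {v : S | ∀ l : Λ, CliffordAlgebra.ι (hypQ k Λ) (l, 0) • v = 0}
      = {v : S | ∃ w : S, v = (List.ofFn e).prod • w} := by
  obtain rfl : e = basisIdempotent b := he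
  refine ⟨isIdempotentElem_basisIdempotent b, commute_basisIdempotent b,
    Set.ext fun v => ⟨?_, ?_⟩⟩
  · intro hv
    refine ⟨v, ((MulAction.stabilizerSubmonoid _ v).list_prod_mem ?_).symm⟩
    simp only [List.mem_ofFn]
    rintro _ ⟨i, rfl⟩
    exact basisIdempotent_smul_of_ι_hypQ_inl_smul_eq_zero b (hv (b i))
  · rintro ⟨w, rfl⟩ l
    rw [smul_smul, ι_hypQ_inl_mul_prod_basisIdempotent, zero_smul]

end
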